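/- Let F ⊆ ℝ × ℝ^d be a closed set. Let t_n → t in ℝ, let x^n, x : [0,∞) → ℝ^d be continuous paths such that x^n converges to x uniformly on every compact subset of [0,∞), and let τ̄_n = inf{s ≥ 0 : (t_n+s, x^n(s)) ∉ F} and τ̄ = inf{s ≥ 0 : (t+s, x(s)) ∉ F}, taken as elements of [0,∞]. Then limsup_{n→∞} τ̄_n ≤ τ̄; that is, the first exit time from a closed set is upper semicontinuous with respect to locally uniform convergence of the initial time and the path. -/

import Mathlib

open scoped ENNReal

/-- The first exit time of the trajectory `s ↦ (t + s, x s)` from a set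
`F ⊆ ℝ × ℝ^d`, as an element of `[0,∞]` (with `inf ∅ = ∞`). -/
noncomputable def exitTime {d : ℕ} (F : Set (ℝ × (Fin d → ℝ))) (t : ℝ)
    (x : ℝ → (Fin d → ℝ)) : ℝ≥0∞ :=
  sInf (ENNReal.ofReal '' {s : ℝ | 0 ≤ s ∧ (t + s, x s) ∉ F})

/-! For every exit point `s` of the limit trajectory, `(t + s, x s)` lies in the open set `Fᶜ`,
so `(tₙ + s, xₙ s)` does too for large `n`, which bounds `τ̄ₙ` by `s` eventually. -/

open Filter Topology

section exitTime

variable {d : ℕ} {F : Set (ℝ × (Fin d → ℝ))}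

theorem exitTime_le_ofReal {t s : ℝ} {x : ℝ → (Fin d → ℝ)} (hs : 0 ≤ s)
    (hsF : (t + s, x s) ∉ F) : exitTime F t x ≤ ENNReal.ofReal s :=
  sInf_le ⟨s, ⟨hs, hsF⟩, rfl⟩

theorem limsup_exitTime_le_of_eventually_notMem {ι : Type*} {l : Filter ι} {t : ℝ}
    {tseq : ι → ℝ} {x : ℝ → (Fin d → ℝ)} {xseq : ι → ℝ → (Fin d → ℝ)}
    (h : ∀ s, 0 ≤ s → (t + s, x s) ∉ F → ∀ᶠ n in l, (tseq n + s, xseq n s) ∉ F) :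
    limsup (fun n => exitTime F (tseq n) (xseq n)) l ≤ exitTime F t x := by
  refine le_sInf ?_
  rintro _ ⟨s, ⟨hs, hsF⟩, rfl⟩
  refine limsup_le_of_le (by isBoundedDefault) ?_
  filter_upwards [h s hs hsF] with n hn
  exact exitTime_le_ofReal hs hn

end exitTime

theorem exitTime_upperSemicontinuous_general {d : ℕ} (F : Set (ℝ × (Fin d → ℝ)))
    (hF : IsClosed F) (t : ℝ) (tseq : ℕ → ℝ)
    (ht : Filter.Tendsto tseq Filter.atTop (nhds t))
    (x : ℝ → (Fin d → ℝ)) (xseq : ℕ → ℝ → (Fin d → ℝ))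
    (hconv : ∀ K : Set ℝ, K ⊆ Set.Ici 0 → IsCompact K →
      TendstoUniformlyOn xseq x Filter.atTop K) :
    Filter.limsup (fun n => exitTime F (tseq n) (xseq n)) Filter.atTop ≤ exitTime F t x := by
  refine limsup_exitTime_le_of_eventually_notMem fun s hs hsF => ?_
  have hxs : Tendsto (fun n => xseq n s) atTop (𝓝 (x s)) :=
    tendstoUniformlyOn_singleton_iff_tendsto.mp
      (hconv {s} (Set.singleton_subset_iff.mpr hs) isCompact_singleton)
  have hpoint : Tendsto (fun n => (tseq n + s, xseq n s)) atTop (𝓝 (t + s, x s)) :=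
    (ht.add_const s).prodMk_nhds hxs
  exact hpoint.eventually (hF.isOpen_compl.eventually_mem hsF)

/-- The first exit time from a closed set `F ⊆ ℝ × ℝ^d` is upper semicontinuous with
respect to convergence of the initial time and locally uniform convergence of the path:
if `tₙ → t` and `xₙ → x` uniformly on every compact subset of `[0,∞)`, then
`limsup τ̄ₙ ≤ τ̄`. -/
theorem exitTime_upperSemicontinuous {d : ℕ} (F : Set (ℝ × (Fin d → ℝ)))
    (hF : IsClosed F) (t : ℝ) (tseq : ℕ → ℝ)
    (ht : Filter.Tendsto tseq Filter.atTop (nhds t))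
    (x : ℝ → (Fin d → ℝ)) (xseq : ℕ → ℝ → (Fin d → ℝ))
    (hx : ContinuousOn x (Set.Ici 0)) (hxn : ∀ n, ContinuousOn (xseq n) (Set.Ici 0))
    (hconv : ∀ K : Set ℝ, K ⊆ Set.Ici 0 → IsCompact K →
      TendstoUniformlyOn xseq x Filter.atTop K) :
    Filter.limsup (fun n => exitTime F (tseq n) (xseq n)) Filter.atTop ≤ exitTime F t x :=
  exitTime_upperSemicontinuous_general F hF t tseq ht x xseq hconv
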